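/- arXiv:2303.10715 — 2 statements merged into one kernel-verified Lean document; each statement's English description precedes it below -/
import Mathlib

section
/- Let $X \leq W_n$, $\alpha \in W_n \setminus X$, and $Y = \langle X, \alpha \rangle$. If $v \in \mathbb{F}_2^{2^n}$ satisfies $v \in \mathrm{Fix}(\Phi(Y))$ and, for every $\beta \in X$, there exists $u^{(\beta)} \in \mathrm{Fix}(\Phi(Y))$ with $\alpha(v) + \alpha\beta(v) = u^{(\beta)} + \alpha\beta(u^{(\beta)})$, then $v + \beta(v) = \alpha(v) + \alpha\beta(v)$ for every $\beta \in X$. -/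
/-- Leaves of the complete rooted binary tree of depth `n`. -/
abbrev Leaf (n : ℕ) := Fin n → Bool

/-- Two leaves agree on the first `k` levels. -/
def agree (n k : ℕ) (x y : Leaf n) : Prop := ∀ i : Fin n, (i : ℕ) < k → x i = y i

/-- The automorphism group of the depth-`n` complete rooted binary tree, realized as the
subgroup of permutations of the leaves preserving, for each `k`, agreement on the first
`k` levels. -/
def W (n : ℕ) : Subgroup (Equiv.Perm (Leaf n)) where
  carrier := {σ | ∀ (k : ℕ) (x y : Leaf n), agree n k x y ↔ agree n k (σ x) (σ y)}
  one_mem' := by intro k x y; rfl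
  mul_mem' := by
    intro a b ha hb k x y
    simpa [Equiv.Perm.mul_apply] using (hb k x y).trans (ha k (b x) (b y))
  inv_mem' := by
    intro a ha k x y
    simpa using (ha k (a⁻¹ x) (a⁻¹ y)).symm

/-- Restriction of a leaf to the first `n-1` levels. -/
def res {n : ℕ} (x : Leaf n) : Leaf (n - 1) := fun i => x (Fin.castLE (Nat.sub_le n 1) i)

/-- Extension of a depth-`n-1` vertex to a leaf. -/
def ext {n : ℕ} (p : Leaf (n - 1)) : Leaf n :=
  fun i => if h : (i : ℕ) < n - 1 then p ⟨i, h⟩ else false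

lemma res_ext {n : ℕ} (p : Leaf (n - 1)) : res (ext p) = p := by
  funext i
  simp [res, ext, i.isLt]

lemma agree_iff_res {n : ℕ} (x y : Leaf n) : agree n (n - 1) x y ↔ res x = res y := by
  constructor
  · intro h; funext i; exact h _ i.isLt
  · intro h i hi
    have h2 : Fin.castLE (Nat.sub_le n 1) (⟨(i : ℕ), hi⟩ : Fin (n - 1)) = i := by
      ext; rfl
    have := congrFun h (⟨(i : ℕ), hi⟩ : Fin (n - 1))
    simpa [res, h2] using this

/-- The natural restriction homomorphism `π_n : W_n → Aut(T_{n-1})`. -/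
def treePi (n : ℕ) : (W n) →* Equiv.Perm (Leaf (n - 1)) where
  toFun σ :=
    { toFun := fun p => res ((σ : Equiv.Perm (Leaf n)) (ext p))
      invFun := fun p => res ((σ : Equiv.Perm (Leaf n))⁻¹ (ext p))
      left_inv := by
        intro p
        have h1 : agree n (n - 1) (ext (res ((σ : Equiv.Perm (Leaf n)) (ext p))))
            ((σ : Equiv.Perm (Leaf n)) (ext p)) :=
          (agree_iff_res _ _).2 (res_ext _)
        have hinv := (W n).inv_mem σ.2
        have h2 := (hinv (n - 1) _ _).1 h1
        have h3 := (agree_iff_res _ _).1 h2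
        simpa [res_ext] using h3
      right_inv := by
        intro p
        have h1 : agree n (n - 1) (ext (res ((σ : Equiv.Perm (Leaf n))⁻¹ (ext p))))
            ((σ : Equiv.Perm (Leaf n))⁻¹ (ext p)) :=
          (agree_iff_res _ _).2 (res_ext _)
        have h2 := (σ.2 (n - 1) _ _).1 h1
        have h3 := (agree_iff_res _ _).1 h2
        simpa [res_ext] using h3 }
  map_one' := by
    refine Equiv.ext fun p => ?_
    simp [res_ext]
  map_mul' := by
    intro σ τ
    refine Equiv.ext fun p => ?_
    have h1 : agree n (n - 1) (ext (res ((τ : Equiv.Perm (Leaf n)) (ext p))))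
        ((τ : Equiv.Perm (Leaf n)) (ext p)) := (agree_iff_res _ _).2 (res_ext _)
    have h2 := (σ.2 (n - 1) _ _).1 h1
    have h3 := (agree_iff_res _ _).1 h2
    simpa using h3.symm

/-- `K_n`, the kernel of `π_n`, viewed as a subgroup of the permutations of the leaves. -/
def K (n : ℕ) : Subgroup (Equiv.Perm (Leaf n)) :=
  Subgroup.map (W n).subtype (treePi n).ker

/-- The conjugate `X^a = a⁻¹ X a` of a subgroup `X` by an element `a`. -/
def conjBy {G : Type*} [Group G] (a : G) (X : Subgroup G) : Subgroup G :=
  X.map (MulAut.conj a⁻¹).toMonoidHom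

/-- `M` is a maximal subgroup of `H` (inside a common ambient group). -/
def IsMaximalIn {G : Type*} [Group G] (M H : Subgroup G) : Prop :=
  M < H ∧ ∀ X : Subgroup G, M < X → X ≤ H → X = H

/-- The Frattini subgroup of `H`: the intersection of all maximal subgroups of `H`. -/
def frattiniIn {G : Type*} [Group G] (H : Subgroup G) : Subgroup G :=
  H ⊓ sInf {M | IsMaximalIn M H}

/-!
An element of `W n` squared `2 ^ k` times fixes the first `k` levels of the tree, so
`Y ≤ W n` is a finite `2`-group. Its maximal subgroups therefore have index `2`, and `Φ(Y)`
contains all squares and commutators; in particular `(αβ)²` and `(αβα)⁻¹β = (⁅β⁻¹, α⁆ α²)⁻¹`.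
Evaluating the hypothesis on `u` at `(αβ)⁻¹ i` and using these two invariances turns it into
`v(β⁻¹ i) + v(i) = u((αβ)⁻¹ i) + u(i)`, the right-hand side of the hypothesis at `i`.
-/

open scoped commutatorElement

lemma agree_succ_iff {n k : ℕ} {x y : Leaf n} :
    agree n (k + 1) x y ↔ agree n k x y ∧ ∀ i : Fin n, (i : ℕ) = k → x i = y i := by
  refine ⟨fun h => ⟨fun i hi => h i (by omega), fun i hi => h i (by omega)⟩, ?_⟩
  rintro ⟨hlt, heq⟩ i hi
  rcases Nat.lt_succ_iff_lt_or_eq.1 hi with hi | hi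
  exacts [hlt i hi, heq i hi]

lemma agree_sq_apply_of_agree {n k : ℕ} {τ : Equiv.Perm (Leaf n)} (hτ : τ ∈ W n)
    (h : ∀ x, agree n k (τ x) x) (x : Leaf n) : agree n (k + 1) ((τ ^ 2) x) x := by
  refine agree_succ_iff.2 ⟨fun i hi => ?_, fun i hi => ?_⟩
  · rw [sq, Equiv.Perm.mul_apply, h (τ x) i hi, h x i hi]
  · have hlevel : ∀ y, agree n (k + 1) (τ y) y ↔ τ y i = y i := fun y =>
      agree_succ_iff.trans <| (and_iff_right (h y)).trans
        ⟨fun hy => hy i hi, fun hy j hj => Fin.ext (hj.trans hi.symm) ▸ hy⟩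
    have hτx := hτ (k + 1) (τ x) x
    rw [hlevel, hlevel] at hτx
    rw [sq, Equiv.Perm.mul_apply]
    -- the bit at level `k` is either kept by both applications of `τ` or flipped by both
    generalize τ (τ x) i = c at hτx ⊢
    generalize τ x i = b at hτx
    generalize x i = a at hτx ⊢
    cases a <;> cases b <;> cases c <;> simp_all

lemma agree_pow_two_pow_apply {n : ℕ} {σ : Equiv.Perm (Leaf n)} (hσ : σ ∈ W n) (k : ℕ)
    (x : Leaf n) : agree n k ((σ ^ 2 ^ k) x) x := by
  induction k generalizing x with
  | zero => intro i hi; omega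
  | succ k ih =>
    rw [pow_succ, pow_mul]
    exact agree_sq_apply_of_agree (pow_mem hσ _) ih x

lemma pow_two_pow_eq_one_of_mem_W {n : ℕ} {σ : Equiv.Perm (Leaf n)} (hσ : σ ∈ W n) :
    σ ^ 2 ^ n = 1 :=
  Equiv.ext fun x => funext fun i => agree_pow_two_pow_apply hσ n x i i.isLt

lemma isPGroup_two_of_le_W {n : ℕ} {Y : Subgroup (Equiv.Perm (Leaf n))} (hY : Y ≤ W n) :
    IsPGroup 2 Y :=
  fun g => ⟨n, Subtype.ext (pow_two_pow_eq_one_of_mem_W (hY g.2))⟩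

lemma IsPGroup.index_eq_of_isCoatom {p : ℕ} [hp : Fact p.Prime] {P : Type*} [Group P]
    [Finite P] (hP : IsPGroup p P) {M : Subgroup P} (hM : IsCoatom M) : M.index = p := by
  obtain ⟨j, hj⟩ := IsPGroup.iff_card.1 (hP.to_subgroup M)
  obtain ⟨i, hi⟩ := hP.index M
  have hi0 : i ≠ 0 := by
    rintro rfl
    exact hM.1 (Subgroup.index_eq_one.1 (by simpa using hi))
  have hdvd : p ^ (j + 1) ∣ Nat.card P := by
    rw [← M.card_mul_index, hj, hi, pow_succ]
    exact mul_dvd_mul_left _ (dvd_pow_self p hi0)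
  obtain ⟨K, hK, hMK⟩ := Sylow.exists_subgroup_card_pow_succ hdvd hj
  have hMK' : M ≠ K := by
    rintro rfl
    have := Nat.pow_right_injective hp.out.two_le (hj.symm.trans hK)
    omega
  have hcard := M.card_mul_index
  rw [← Subgroup.card_top (G := P), ← hM.2 K (hMK.lt_of_ne hMK'), hK, hj, pow_succ] at hcard
  exact Nat.eq_of_mul_eq_mul_left (pow_pos hp.out.pos j) hcard

lemma IsMaximalIn.isCoatom_subgroupOf {G : Type*} [Group G] {M H : Subgroup G}
    (hM : IsMaximalIn M H) : IsCoatom (M.subgroupOf H) := by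
  refine ⟨fun h => hM.1.not_ge (Subgroup.subgroupOf_eq_top.1 h), fun K hK => ?_⟩
  rw [← Subgroup.map_subtype_inj, ← MonoidHom.range_eq_map, Subgroup.range_subtype]
  refine hM.2 _ ?_ (Subgroup.map_subtype_le K)
  rwa [← Subgroup.map_subgroupOf_eq_of_le hM.1.le, Subgroup.map_subtype_lt_map_subtype]

lemma mem_frattiniIn_iff {G : Type*} [Group G] {H : Subgroup G} {g : G} :
    g ∈ frattiniIn H ↔ g ∈ H ∧ ∀ M, IsMaximalIn M H → g ∈ M := by
  simp [frattiniIn]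

section TwoGroup

variable {G : Type*} [Group G] {Y : Subgroup G} [Finite Y]

lemma IsMaximalIn.mul_mem_iff (hY : IsPGroup 2 Y) {M : Subgroup G} (hM : IsMaximalIn M Y)
    {a b : G} (ha : a ∈ Y) (hb : b ∈ Y) : a * b ∈ M ↔ (a ∈ M ↔ b ∈ M) :=
  Subgroup.mul_mem_iff_of_index_two (a := ⟨a, ha⟩) (b := ⟨b, hb⟩)
    (hY.index_eq_of_isCoatom hM.isCoatom_subgroupOf)

lemma sq_mem_frattiniIn (hY : IsPGroup 2 Y) {g : G} (hg : g ∈ Y) : g ^ 2 ∈ frattiniIn Y :=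
  mem_frattiniIn_iff.2 ⟨pow_mem hg 2, fun M hM => by rw [sq, hM.mul_mem_iff hY hg hg]⟩

lemma commutatorElement_mem_frattiniIn (hY : IsPGroup 2 Y) {g h : G} (hg : g ∈ Y)
    (hh : h ∈ Y) : ⁅g, h⁆ ∈ frattiniIn Y := by
  have hgh : g * h ∈ Y := mul_mem hg hh
  have hghg : g * h * g⁻¹ ∈ Y := mul_mem hgh (inv_mem hg)
  refine mem_frattiniIn_iff.2 ⟨mul_mem hghg (inv_mem hh), fun M hM => ?_⟩
  rw [commutatorElement_def, hM.mul_mem_iff hY hghg (inv_mem hh),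
    hM.mul_mem_iff hY hgh (inv_mem hg), hM.mul_mem_iff hY hg hh, inv_mem_iff, inv_mem_iff]
  tauto

end TwoGroup

theorem stmt15_general (n : ℕ) (X : Subgroup (Equiv.Perm (Leaf n))) (hX : X ≤ W n)
    (α : Equiv.Perm (Leaf n)) (hαW : α ∈ W n)
    (Y : Subgroup (Equiv.Perm (Leaf n))) (hY : Y = X ⊔ Subgroup.closure {α})
    (v : Leaf n → ZMod 2)
    (h1 : ∀ β ∈ X, ∃ u : Leaf n → ZMod 2, (∀ γ ∈ frattiniIn Y, ∀ i, u (γ i) = u i) ∧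
      ∀ i, v (α⁻¹ i) + v ((α * β)⁻¹ i) = u i + u ((α * β)⁻¹ i))
    (h2 : ∀ γ ∈ frattiniIn Y, ∀ i, v (γ i) = v i) :
    ∀ β ∈ X, ∀ i, v i + v (β⁻¹ i) = v (α⁻¹ i) + v ((α * β)⁻¹ i) := by
  have hαY : α ∈ Y := hY ▸ Subgroup.mem_sup_right (Subgroup.mem_closure_singleton_self α)
  have hY2 : IsPGroup 2 Y := isPGroup_two_of_le_W <|
    hY ▸ sup_le hX ((Subgroup.closure_le _).2 (Set.singleton_subset_iff.2 hαW))
  intro β hβ i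
  have hβY : β ∈ Y := hY ▸ Subgroup.mem_sup_left hβ
  have hsq : (α * β)⁻¹ * (α * β)⁻¹ ∈ frattiniIn Y := by
    rw [← mul_inv_rev, ← sq]
    exact inv_mem (sq_mem_frattiniIn hY2 (mul_mem hαY hβY))
  have hcomm : (α * β * α)⁻¹ * β ∈ frattiniIn Y := by
    rw [show (α * β * α)⁻¹ * β = (⁅β⁻¹, α⁆ * α ^ 2)⁻¹ by group]
    exact inv_mem (mul_mem (commutatorElement_mem_frattiniIn hY2 (inv_mem hβY) hαY)
      (sq_mem_frattiniIn hY2 hαY))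
  obtain ⟨u, hu, huv⟩ := h1 β hβ
  have hv_sq : v ((α * β)⁻¹ ((α * β)⁻¹ i)) = v i := h2 _ hsq i
  have hu_sq : u ((α * β)⁻¹ ((α * β)⁻¹ i)) = u i := hu _ hsq i
  have hv_comm : v (α⁻¹ ((α * β)⁻¹ i)) = v (β⁻¹ i) := by
    simpa [Equiv.Perm.mul_apply, mul_inv_rev] using h2 _ hcomm (β⁻¹ i)
  have huv' := huv ((α * β)⁻¹ i)
  rw [hv_sq, hu_sq, hv_comm] at huv'
  linear_combination huv' - huv i

/-- equation (5.3): under the hypotheses of Proposition 5.4, for every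
`β ∈ X` one has `v + β(v) = α(v) + αβ(v)`. -/
theorem stmt15 (n : ℕ) (X : Subgroup (Equiv.Perm (Leaf n))) (hX : X ≤ W n)
    (α : Equiv.Perm (Leaf n)) (hαW : α ∈ W n) (hαX : α ∉ X)
    (Y : Subgroup (Equiv.Perm (Leaf n))) (hY : Y = X ⊔ Subgroup.closure {α})
    (v : Leaf n → ZMod 2)
    (h1 : ∀ β ∈ X, ∃ u : Leaf n → ZMod 2, (∀ γ ∈ frattiniIn Y, ∀ i, u (γ i) = u i) ∧
      ∀ i, v (α⁻¹ i) + v ((α * β)⁻¹ i) = u i + u ((α * β)⁻¹ i))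
    (h2 : ∀ γ ∈ frattiniIn Y, ∀ i, v (γ i) = v i) :
    ∀ β ∈ X, ∀ i, v i + v (β⁻¹ i) = v (α⁻¹ i) + v ((α * β)⁻¹ i) :=
  stmt15_general n X hX α hαW Y hY v h1 h2
end

section
/- Let $H, G \leq W_n$ be subgroups of the automorphism group of the depth-$n$ complete rooted binary tree with $|H| = |G|$ and $H \cap K_n = \{\mathrm{id}\}$. If every element of $H$ can be conjugated into $G$ by some element of $K_n$, then the entire group $H$ can be conjugated into $G$ by a single element of $K_n$ (in fact $H^b = G$ for some $b \in K_n$). -/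
/-! Every element of `K n` flips the last coordinate of the leaves over some set of vertices of
level `n - 1`; recording that set as a function to `ZMod 2` identifies `K n` with
`Leaf (n - 1) → ZMod 2`, and conjugation by `σ ∈ W n` becomes precomposition with the
action of `σ` on level `n - 1`. Since `H ∩ K n = 1` and `|H| = |G|`, restriction to level `n - 1`
is injective on `G` as well, so the elementwise conjugates `a⁻¹ h a ∈ G` form a homomorphism
`Φ : H → G`. Then `h ↦ h⁻¹ Φ(h)` is a `1`-cocycle of `H` in this permutation module which
vanishes at every point fixed by `h`; such a cocycle is a coboundary (build it one orbit at a
time), and the coboundary is the single conjugating element. -/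

theorem exists_coboundary_of_fixed_eq_zero {G Ω A : Type*} [Group G] [MulAction G Ω]
    [AddCommGroup A] (c : G → Ω → A) (hc : ∀ g h p, c (g * h) p = c g (h • p) + c h p)
    (hfix : ∀ g p, g • p = p → c g p = 0) :
    ∃ b : Ω → A, ∀ g p, c g p = b (g • p) - b p := by
  have hinv : ∀ g p, c g⁻¹ (g • p) = -c g p := fun g p => by
    have h := hc g⁻¹ g p
    rw [inv_mul_cancel, hfix 1 p (one_smul G p)] at h
    exact eq_neg_of_add_eq_zero_left h.symm
  let r : Ω → Ω := fun p => (Quotient.mk (MulAction.orbitRel G Ω) p).out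
  have hr : ∀ p, ∃ g : G, g • r p = p := fun p =>
    MulAction.orbitRel_apply.mp ((MulAction.orbitRel G Ω).iseqv.symm (Quotient.mk_out p))
  choose s hs using hr
  refine ⟨fun p => c (s p) (r p), fun g p => ?_⟩
  have hrg : r (g • p) = r p :=
    congrArg Quotient.out (Quotient.sound (MulAction.mem_orbit p g) :
      Quotient.mk (MulAction.orbitRel G Ω) (g • p) = Quotient.mk _ p)
  simp only [hrg]
  set t := s (g • p)
  have ht : t • r p = g • p := hrg ▸ hs (g • p)
  have h := hfix (t⁻¹ * (g * s p)) (r p) (by rw [mul_smul, mul_smul, hs, inv_smul_eq_iff, ht])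
  rw [hc, hc, mul_smul, hs, ← ht, hinv] at h
  exact eq_sub_of_add_eq (neg_add_eq_zero.mp h).symm

theorem Set.InjOn.of_image_subset_of_ncard_le {α β : Type*} {f : α → β} {s t : Set α}
    (hs : Set.InjOn f s) (ht : t.Finite) (hst : f '' s ⊆ f '' t) (hcard : t.ncard ≤ s.ncard) :
    Set.InjOn f t :=
  Set.injOn_of_ncard_image_eq (le_antisymm (Set.ncard_image_le ht)
    (hcard.trans (hs.ncard_image ▸ Set.ncard_le_ncard hst (ht.image f)))) ht

theorem conjBy_le_iff {G : Type*} [Group G] {a : G} {X Y : Subgroup G} :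
    conjBy a X ≤ Y ↔ ∀ x ∈ X, a⁻¹ * x * a ∈ Y := by
  simp [conjBy, SetLike.le_def]

theorem card_conjBy {G : Type*} [Group G] (a : G) (X : Subgroup G) :
    Nat.card (conjBy a X) = Nat.card X :=
  Subgroup.card_map_of_injective (MulAut.conj a⁻¹).injective

theorem zmod_two_eq_zero_or_eq_one (u : ZMod 2) : u = 0 ∨ u = 1 := by
  revert u
  decide

section Tree

variable {n : ℕ}

def flipLast (x : Leaf n) : Leaf n := fun i => if (i : ℕ) = n - 1 then !x i else x i

theorem res_flipLast (x : Leaf n) : res (flipLast x) = res x := by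
  funext i
  simp [res, flipLast, Nat.ne_of_lt i.isLt]

theorem flipLast_flipLast (x : Leaf n) : flipLast (flipLast x) = x := by
  funext i
  by_cases hi : (i : ℕ) = n - 1 <;> simp [flipLast, hi]

theorem flipLast_ne (hn : 0 < n) (x : Leaf n) : flipLast x ≠ x := fun h => by
  simpa [flipLast] using congrFun h ⟨n - 1, by omega⟩

theorem eq_or_eq_flipLast_of_res_eq (hn : 0 < n) {x y : Leaf n} (h : res x = res y) :
    x = y ∨ x = flipLast y := by
  have hlow : ∀ i : Fin n, (i : ℕ) ≠ n - 1 → x i = y i := fun i hi =>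
    congrFun h ⟨i, by omega⟩
  let last : Fin n := ⟨n - 1, by omega⟩
  by_cases hl : x last = y last
  · left
    funext i
    by_cases hi : (i : ℕ) = n - 1
    · rwa [show i = last from Fin.ext hi]
    · exact hlow i hi
  · right
    funext i
    by_cases hi : (i : ℕ) = n - 1
    · obtain rfl : i = last := Fin.ext hi
      simpa [flipLast, last] using Bool.eq_not.mpr hl
    · simp [flipLast, hi, hlow i hi]

/-- The permutation of level `n - 1` induced by `σ`; for `σ : W n` it is `treePi n σ`. -/
def resMap (σ : Equiv.Perm (Leaf n)) (p : Leaf (n - 1)) : Leaf (n - 1) := res (σ (ext p))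

theorem res_apply_of_mem_W {σ : Equiv.Perm (Leaf n)} (hσ : σ ∈ W n) (x : Leaf n) :
    res (σ x) = resMap σ (res x) :=
  ((agree_iff_res _ _).1 ((hσ (n - 1) _ _).1 ((agree_iff_res _ _).2 (res_ext (res x))))).symm

theorem resMap_mul {σ : Equiv.Perm (Leaf n)} (hσ : σ ∈ W n) (τ : Equiv.Perm (Leaf n)) :
    resMap (σ * τ) = resMap σ ∘ resMap τ :=
  funext fun p => res_apply_of_mem_W hσ (τ (ext p))

theorem resMap_one : resMap (1 : Equiv.Perm (Leaf n)) = id :=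
  funext res_ext

theorem mem_W_of_res_apply_eq {a : Equiv.Perm (Leaf n)} (ha : ∀ x, res (a x) = res x) :
    a ∈ W n := by
  intro k x y
  rcases lt_or_ge k n with hk | hk
  · have hlow : ∀ z (i : Fin n), (i : ℕ) < k → a z i = z i := fun z i hi =>
      congrFun (ha z) ⟨i, by omega⟩
    exact forall_congr' fun i => forall_congr' fun hi => by rw [hlow x i hi, hlow y i hi]
  · have hagree : ∀ x y : Leaf n, agree n k x y ↔ x = y := fun x y =>
      ⟨fun h => funext fun i => h i (by omega), fun h i _ => by rw [h]⟩
    rw [hagree, hagree, a.injective.eq_iff]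

theorem mem_K_iff {a : Equiv.Perm (Leaf n)} : a ∈ K n ↔ ∀ x, res (a x) = res x := by
  constructor
  · rintro ⟨σ, hσ, rfl⟩ x
    show res ((σ : Equiv.Perm (Leaf n)) x) = res x
    rw [res_apply_of_mem_W σ.2]
    exact congrFun (congrArg DFunLike.coe (MonoidHom.mem_ker.1 hσ)) (res x)
  · intro ha
    exact ⟨⟨a, mem_W_of_res_apply_eq ha⟩,
      MonoidHom.mem_ker.2 (Equiv.ext fun p => (ha (ext p)).trans (res_ext p)), rfl⟩

theorem K_le_W : K n ≤ W n :=
  Subgroup.map_subtype_le _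

theorem resMap_eq_id_of_mem_K {a : Equiv.Perm (Leaf n)} (ha : a ∈ K n) : resMap a = id :=
  funext fun p => (mem_K_iff.1 ha (ext p)).trans (res_ext p)

theorem resMap_conj_of_mem_K {a σ : Equiv.Perm (Leaf n)} (ha : a ∈ K n) (hσ : σ ∈ W n) :
    resMap (a⁻¹ * σ * a) = resMap σ := by
  have ha' : a⁻¹ ∈ W n := K_le_W (inv_mem ha)
  rw [resMap_mul (mul_mem ha' hσ), resMap_mul ha',
    resMap_eq_id_of_mem_K ha, resMap_eq_id_of_mem_K (inv_mem ha)]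
  rfl

theorem injOn_resMap {H : Subgroup (Equiv.Perm (Leaf n))} (hH : H ≤ W n) (htriv : H ⊓ K n = ⊥) :
    Set.InjOn resMap (H : Set (Equiv.Perm (Leaf n))) := by
  intro g (hg : g ∈ H) h (hh : h ∈ H) hgh
  have hK : h⁻¹ * g ∈ K n := mem_K_iff.2 fun x => by
    rw [Equiv.Perm.mul_apply, res_apply_of_mem_W (hH (H.inv_mem hh)), res_apply_of_mem_W (hH hg),
      hgh, ← Function.comp_apply (f := resMap h⁻¹), ← resMap_mul (hH (H.inv_mem hh)),
      inv_mul_cancel, resMap_one, id]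
  have hmem : h⁻¹ * g ∈ H ⊓ K n := ⟨H.mul_mem (H.inv_mem hh) hg, hK⟩
  rw [htriv, Subgroup.mem_bot, inv_mul_eq_one] at hmem
  exact hmem.symm

theorem apply_flipLast_of_mem_W (hn : 0 < n) {σ : Equiv.Perm (Leaf n)} (hσ : σ ∈ W n)
    (x : Leaf n) : σ (flipLast x) = flipLast (σ x) := by
  have h : res (σ (flipLast x)) = res (σ x) := by
    rw [res_apply_of_mem_W hσ, res_apply_of_mem_W hσ, res_flipLast]
  exact (eq_or_eq_flipLast_of_res_eq hn h).resolve_left fun h' => flipLast_ne hn x (σ.injective h')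

def fiberFlip (f : Leaf (n - 1) → ZMod 2) : Equiv.Perm (Leaf n) :=
  Function.Involutive.toPerm (fun x => if f (res x) = 1 then flipLast x else x) fun x => by
    by_cases hx : f (res x) = 1 <;> simp [hx, res_flipLast, flipLast_flipLast]

theorem fiberFlip_apply (f : Leaf (n - 1) → ZMod 2) (x : Leaf n) :
    fiberFlip f x = if f (res x) = 1 then flipLast x else x :=
  rfl

theorem res_fiberFlip (f : Leaf (n - 1) → ZMod 2) (x : Leaf n) : res (fiberFlip f x) = res x := by
  rw [fiberFlip_apply]
  split_ifs
  exacts [res_flipLast x, rfl]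

theorem fiberFlip_mem_K (f : Leaf (n - 1) → ZMod 2) : fiberFlip f ∈ K n :=
  mem_K_iff.2 (res_fiberFlip f)

theorem fiberFlip_zero : fiberFlip (0 : Leaf (n - 1) → ZMod 2) = 1 :=
  Equiv.ext fun x => by simp [fiberFlip_apply]

theorem fiberFlip_add (f g : Leaf (n - 1) → ZMod 2) :
    fiberFlip (f + g) = fiberFlip f * fiberFlip g := by
  ext1 x
  rw [Equiv.Perm.mul_apply, fiberFlip_apply f, res_fiberFlip]
  simp only [fiberFlip_apply, Pi.add_apply]
  rcases zmod_two_eq_zero_or_eq_one (f (res x)) with hf | hf <;>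
  rcases zmod_two_eq_zero_or_eq_one (g (res x)) with hg | hg <;>
  simp [hf, hg, flipLast_flipLast]

theorem fiberFlip_neg (f : Leaf (n - 1) → ZMod 2) : fiberFlip (-f) = (fiberFlip f)⁻¹ :=
  eq_inv_of_mul_eq_one_left (by rw [← fiberFlip_add, neg_add_cancel, fiberFlip_zero])

theorem fiberFlip_injective (hn : 0 < n) :
    Function.Injective (fiberFlip : (Leaf (n - 1) → ZMod 2) → Equiv.Perm (Leaf n)) := by
  intro f g hfg
  funext p
  have h := Equiv.congr_fun hfg (ext p)
  simp only [fiberFlip_apply, res_ext] at h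
  rcases zmod_two_eq_zero_or_eq_one (f p) with hf | hf <;>
  rcases zmod_two_eq_zero_or_eq_one (g p) with hg | hg <;>
  simp_all [flipLast_ne hn, (flipLast_ne hn _).symm]

theorem exists_fiberFlip_eq (hn : 0 < n) {a : Equiv.Perm (Leaf n)} (ha : a ∈ K n) :
    ∃ f, fiberFlip f = a := by
  classical
  refine ⟨fun p => if a (ext p) = ext p then 0 else 1, Equiv.ext fun x => ?_⟩
  obtain ⟨p, hp⟩ : ∃ p, res x = p := ⟨_, rfl⟩
  rw [fiberFlip_apply, hp]
  rcases eq_or_eq_flipLast_of_res_eq hn (hp.trans (res_ext p).symm) with rfl | rfl <;>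
  rcases eq_or_eq_flipLast_of_res_eq hn (mem_K_iff.1 ha (ext p)) with he | he <;>
  simp [he, apply_flipLast_of_mem_W hn (K_le_W ha), flipLast_flipLast, flipLast_ne hn]

theorem fiberFlip_conj (hn : 0 < n) {σ : Equiv.Perm (Leaf n)} (hσ : σ ∈ W n)
    (f : Leaf (n - 1) → ZMod 2) : σ⁻¹ * fiberFlip f * σ = fiberFlip (f ∘ resMap σ) := by
  rw [mul_assoc, inv_mul_eq_iff_eq_mul]
  ext1 x
  simp only [Equiv.Perm.mul_apply, fiberFlip_apply, Function.comp_apply, res_apply_of_mem_W hσ]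
  split_ifs
  exacts [(apply_flipLast_of_mem_W hn hσ x).symm, rfl]

theorem fiberFlip_commutator (hn : 0 < n) {σ : Equiv.Perm (Leaf n)} (hσ : σ ∈ W n)
    (f : Leaf (n - 1) → ZMod 2) :
    σ⁻¹ * (fiberFlip f)⁻¹ * σ * fiberFlip f = fiberFlip (f - f ∘ resMap σ) := by
  rw [← fiberFlip_neg, fiberFlip_conj hn hσ, ← fiberFlip_add, Pi.neg_comp, neg_add_eq_sub]

end Tree

theorem exists_mem_K_conj_eq {n : ℕ} {H : Subgroup (Equiv.Perm (Leaf n))} (hH : H ≤ W n)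
    (Φ : H →* Equiv.Perm (Leaf n)) (hΦ : ∀ h : H, ∃ a ∈ K n, a⁻¹ * h * a = Φ h) :
    ∃ b ∈ K n, ∀ h : H, b⁻¹ * h * b = Φ h := by
  rcases n.eq_zero_or_pos with rfl | hn
  · exact ⟨1, one_mem _, fun h => Subsingleton.elim _ _⟩
  have hα : ∀ h : H, ∃ α, (fiberFlip α)⁻¹ * (h : Equiv.Perm (Leaf n)) * fiberFlip α = Φ h :=
      fun h => by
    obtain ⟨a, ha, hah⟩ := hΦ h
    obtain ⟨α, rfl⟩ := exists_fiberFlip_eq hn ha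
    exact ⟨α, hah⟩
  choose α hα using hα
  let c : H → Leaf (n - 1) → ZMod 2 := fun h => α h - α h ∘ resMap h
  have hc : ∀ h : H, fiberFlip (c h) = (h : Equiv.Perm (Leaf n))⁻¹ * Φ h := fun h => by
    rw [← fiberFlip_commutator hn (hH h.2), ← hα]
    group
  -- with this action `h • p` unfolds to `resMap h p`
  let _ : MulAction H (Leaf (n - 1)) :=
    MulAction.compHom _ ((treePi n).comp (Subgroup.inclusion hH))
  have hcocycle : ∀ g h : H, c (g * h) = c g ∘ resMap h + c h := fun g h => by
    refine fiberFlip_injective hn ?_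
    rw [fiberFlip_add, ← fiberFlip_conj hn (hH h.2), hc, hc, hc, map_mul, Subgroup.coe_mul]
    group
  obtain ⟨β, hβ⟩ := exists_coboundary_of_fixed_eq_zero c
    (fun g h p => congrFun (hcocycle g h) p)
    (fun h p (hp : resMap h p = p) => by simp [c, hp])
  refine ⟨fiberFlip (-β), fiberFlip_mem_K _, fun h =>
    mul_left_cancel (a := (h : Equiv.Perm (Leaf n))⁻¹) ?_⟩
  rw [← hc, ← mul_assoc, ← mul_assoc, fiberFlip_commutator hn (hH h.2)]
  congr 1
  funext p
  rw [hβ h p]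
  show -β p - -β (resMap h p) = β (resMap h p) - β p
  abel

theorem exists_monoidHom_conj_mem {n : ℕ} {H G : Subgroup (Equiv.Perm (Leaf n))}
    (hH : H ≤ W n) (hG : G ≤ W n) (hinj : Set.InjOn resMap (G : Set (Equiv.Perm (Leaf n))))
    (helem : ∀ h ∈ H, ∃ a ∈ K n, a⁻¹ * h * a ∈ G) :
    ∃ Φ : H →* Equiv.Perm (Leaf n), ∀ h, Φ h ∈ G ∧ ∃ a ∈ K n, a⁻¹ * h * a = Φ h := by
  choose a ha haG using fun h : H => helem h h.2
  have hres : ∀ h : H, resMap ((a h)⁻¹ * (h : Equiv.Perm (Leaf n)) * a h) = resMap h := fun h =>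
    resMap_conj_of_mem_K (ha h) (hH h.2)
  refine ⟨{ toFun := fun h => (a h)⁻¹ * h * a h, map_one' := ?_, map_mul' := ?_ },
    fun h => ⟨haG h, a h, ha h, rfl⟩⟩
  · exact hinj (haG 1) G.one_mem (hres 1)
  · intro g h
    refine hinj (haG _) (G.mul_mem (haG g) (haG h)) ?_
    rw [hres, resMap_mul (hG (haG g)), hres, hres]
    exact resMap_mul (hH g.2) _

/-- Theorem 1.4: if `|H| = |G|`, `H ∩ K_n = 1`, and `H` is elementwise
`K_n`-conjugate into `G`, then `H` is globally `K_n`-conjugate onto `G`. -/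
theorem stmt16 (n : ℕ) (H G : Subgroup (Equiv.Perm (Leaf n)))
    (hH : H ≤ W n) (hG : G ≤ W n)
    (hcard : Nat.card H = Nat.card G)
    (htriv : H ⊓ K n = ⊥)
    (helem : ∀ h ∈ H, ∃ a ∈ K n, a⁻¹ * h * a ∈ G) :
    ∃ b ∈ K n, conjBy b H = G := by
  have hinj : Set.InjOn resMap (G : Set (Equiv.Perm (Leaf n))) := by
    refine (injOn_resMap hH htriv).of_image_subset_of_ncard_le (Set.toFinite _) ?_ ?_
    · rintro _ ⟨h, hh, rfl⟩
      obtain ⟨a, ha, haG⟩ := helem h hh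
      exact ⟨_, haG, resMap_conj_of_mem_K ha (hH hh)⟩
    · rw [← Nat.card_coe_set_eq, ← Nat.card_coe_set_eq]
      exact hcard.ge
  obtain ⟨Φ, hΦ⟩ := exists_monoidHom_conj_mem hH hG hinj helem
  obtain ⟨b, hb, hbΦ⟩ := exists_mem_K_conj_eq hH Φ fun h => (hΦ h).2
  refine ⟨b, hb, Subgroup.eq_of_le_of_card_ge (conjBy_le_iff.2 fun h hh => ?_) ?_⟩
  · exact hbΦ ⟨h, hh⟩ ▸ (hΦ ⟨h, hh⟩).1
  · rw [card_conjBy, hcard]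
end
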